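/- Let ϑ ∈ I and let ζ be the unique fluid model solution with initial measure ϑ. Then for each 1 ≤ k ≤ K, the map t ↦ ζ_k(t) is continuous from [0,∞) into the space of finite Borel measures on [0,∞)² equipped with the topology of weak convergence (equivalently, the Prohorov metric). -/

import Mathlib

/-!
At time `t`, `ζ_k(t)` is the restriction to the quadrant `Q` of the translate of `ϑ_k` by
`-(t, t)` plus `λ_k` times the push-forward of `Leb ⊗ Γ_k`, over arrivals `(s, p)` with
`0 < s < t` and `w(s) > 0`, under `(s, p) ↦ (w(s) - (t - s), p - (t - s))`. Hence `∫ f dζ_k(t)`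
is a sum of two integrals against fixed measures, continuous in `t` by dominated convergence once
the integrands are a.e. continuous at `t₀`. They can only jump when a point crosses the boundary
of `Q` at time `t₀`. For the first term these points lie on two lines inside corner sets `C_x`,
null by (I.1). For the second they lie on `s = t₀`, on `s + p = t₀`, or satisfy
`w(s) + s = t₀ < s + p`; the last set is null because each level set of the nondecreasing map
`s ↦ w(s) + s` (its increments are `Σ_j ρ_j ∫ G_j(w)`) holds at most one `s` with `G_k(w(s)) > 0`.
-/

open MeasureTheory Set Filter Topology
open scoped ENNReal

noncomputable section

namespace OverloadedFIFO

/-- The complement `G(x) = Γ((x, ∞))` of the cumulative distribution function of `Γ`. -/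
def Gk (Γ : MeasureTheory.Measure ℝ) (x : ℝ) : ℝ := (Γ (Set.Ioi x)).toReal

/-- Model data: `K` job classes with arrival rates `lam`, service rates `mu`, and
deadline (patience) distributions `Γ`, in the overloaded regime `ρ > 1`.  Each `Γ k` is a
Borel probability measure on `[0,∞)` (no mass on negatives), with continuous c.d.f.
(no atoms, in particular `Γ k {0} = 0`) and finite mean. -/
structure Data (K : ℕ) where
  lam : Fin K → ℝ
  mu : Fin K → ℝ
  Γ : Fin K → MeasureTheory.Measure ℝ
  lam_pos : ∀ k, 0 < lam k
  mu_pos : ∀ k, 0 < mu k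
  Γ_prob : ∀ k, MeasureTheory.IsProbabilityMeasure (Γ k)
  Γ_null_neg : ∀ k, Γ k (Set.Iio 0) = 0
  Γ_noAtom : ∀ k, ∀ x : ℝ, Γ k {x} = 0
  Γ_finite_mean : ∀ k, MeasureTheory.Integrable id (Γ k)
  rho_gt_one : 1 < ∑ k, lam k / mu k

instance {K : ℕ} (D : Data K) (k : Fin K) : IsProbabilityMeasure (D.Γ k) := D.Γ_prob k

/-- `ρ_k = λ_k / μ_k`. -/
def Data.rho {K : ℕ} (D : Data K) (k : Fin K) : ℝ := D.lam k / D.mu k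

/-- `ρ = Σ_k ρ_k`. -/
def Data.rhoTot {K : ℕ} (D : Data K) : ℝ := ∑ k, D.rho k

/-- A workload fluid model solution: a nonnegative function `w` on `[0,∞)` satisfying
`w(t) = w(0) + Σ_k ρ_k ∫_0^t G_k(w(s)) ds − t` for all `t ≥ 0`. -/
def IsWorkloadSol {K : ℕ} (D : Data K) (w : ℝ → ℝ) : Prop :=
  (∀ t : ℝ, 0 ≤ t → 0 ≤ w t) ∧
  (∀ k : Fin K, ∀ t : ℝ, 0 ≤ t →
    IntervalIntegrable (fun s => Gk (D.Γ k) (w s)) volume 0 t) ∧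
  (∀ t : ℝ, 0 ≤ t →
    w t = w 0 + (∑ k, D.rho k * ∫ s in (0:ℝ)..t, Gk (D.Γ k) (w s)) - t)

/-- `w_l = sup {u ≥ 0 : Σ_k ρ_k G_k(u) > 1}`. -/
def wl {K : ℕ} (D : Data K) : ℝ :=
  sSup {u : ℝ | 0 ≤ u ∧ 1 < ∑ k, D.rho k * Gk (D.Γ k) u}

/-- `w_u = sup {u ≥ 0 : Σ_k ρ_k G_k(u) ≥ 1}`. -/
def wu {K : ℕ} (D : Data K) : ℝ :=
  sSup {u : ℝ | 0 ≤ u ∧ 1 ≤ ∑ k, D.rho k * Gk (D.Γ k) u}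

/-- `d_max = max_k sup {x ≥ 0 : G_k(x) > 0} ∈ (0,∞]`, as an extended nonnegative real. -/
def dmax {K : ℕ} (D : Data K) : ℝ≥0∞ :=
  ⨆ k, sSup (ENNReal.ofReal '' {x : ℝ | 0 ≤ x ∧ 0 < Gk (D.Γ k) x})

/-- `τ(t) = inf {s ∈ [0,t] : w(s) + s ≥ t}`. -/
def tauF (w : ℝ → ℝ) (t : ℝ) : ℝ := sInf {s : ℝ | 0 ≤ s ∧ s ≤ t ∧ t ≤ w s + s}

/-- The nonnegative quadrant `[0,∞)²`. -/
def Q : Set (ℝ × ℝ) := {p | 0 ≤ p.1 ∧ 0 ≤ p.2}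

/-- The shift `B_x = {y ∈ [0,∞)² : y − x ∈ B}` of a set `B ⊆ [0,∞)²`. -/
def shift (B : Set (ℝ × ℝ)) (x : ℝ × ℝ) : Set (ℝ × ℝ) :=
  {y | y ∈ Q ∧ (y.1 - x.1, y.2 - x.2) ∈ B}

/-- Diagonal shift `B_t = B_{(t,t)}`. -/
def shiftd (B : Set (ℝ × ℝ)) (t : ℝ) : Set (ℝ × ℝ) := shift B (t, t)

/-- The set `C = ([0,∞)×{0}) ∪ ({0}×[0,∞))`. -/
def Cset : Set (ℝ × ℝ) := {p | (0 ≤ p.1 ∧ p.2 = 0) ∨ (p.1 = 0 ∧ 0 ≤ p.2)}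

/-- The `κ`-enlargement `B^κ = {x ∈ [0,∞)² : inf_{y ∈ B} ‖x−y‖ < κ}` (Euclidean norm). -/
def enlarge (B : Set (ℝ × ℝ)) (κ : ℝ) : Set (ℝ × ℝ) :=
  {x | x ∈ Q ∧ ∃ y ∈ B, Real.sqrt ((x.1 - y.1) ^ 2 + (x.2 - y.2) ^ 2) < κ}

/-- `w_ϑ = sup {x ≥ 0 : ϑ_+([x,∞)×[0,∞)) > 0}` for a `K`-tuple `ϑ` of measures on `[0,∞)²`. -/
def wMeas {K : ℕ} (ϑ : Fin K → MeasureTheory.Measure (ℝ × ℝ)) : ℝ :=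
  sSup {x : ℝ | 0 ≤ x ∧ 0 < ∑ k, ϑ k (Set.Ici x ×ˢ Set.Ici (0:ℝ))}

/-- Membership in the set `I` of admissible initial measures: each `ϑ k` is a finite Borel
measure on `[0,∞)²`; (I.1) the superposition charges no corner set `C_x`, `x ∈ [0,∞)²`;
(I.2) `w_ϑ < ∞`; (I.3) `max_k G_k(w_ϑ − ε) > 0` for every `ε > 0`. -/
def MemI {K : ℕ} (D : Data K) (ϑ : Fin K → MeasureTheory.Measure (ℝ × ℝ)) : Prop :=
  (∀ k, IsFiniteMeasure (ϑ k)) ∧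
  (∀ k, ϑ k Qᶜ = 0) ∧
  (∀ x ∈ Q, (∑ k, ϑ k (shift Cset x)) = 0) ∧
  BddAbove {x : ℝ | 0 ≤ x ∧ 0 < ∑ k, ϑ k (Set.Ici x ×ˢ Set.Ici (0:ℝ))} ∧
  (∀ ε : ℝ, 0 < ε → ∃ k, 0 < Gk (D.Γ k) (wMeas ϑ - ε))

/-- `δ⁺_w`: the Dirac measure at `w` if `w > 0`, and the zero measure otherwise. -/
def deltaPlus (w : ℝ) : MeasureTheory.Measure ℝ :=
  if 0 < w then MeasureTheory.Measure.dirac w else 0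

instance (w : ℝ) : SFinite (deltaPlus w) := by
  unfold deltaPlus; split_ifs <;> infer_instance

/-- `(δ⁺_w × Γ)(B)`, as a real number. -/
def kern (Γ : MeasureTheory.Measure ℝ) (w : ℝ) (B : Set (ℝ × ℝ)) : ℝ :=
  (((deltaPlus w).prod Γ) B).toReal

/-- A (measure-valued) fluid model solution with initial measure `ϑ`: a family
`ζ(t) = (ζ_1(t),…,ζ_K(t))` of finite Borel measures on `[0,∞)²` with `ζ(0) = ϑ` satisfying
`ζ_k(t)(B) = ϑ_k(B_t) + λ_k ∫_0^t (δ⁺_{w(s)} × Γ_k)(B_{t−s}) ds` for every Borel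
`B ⊆ [0,∞)²` and `t ≥ 0`, where `w` is the (unique) workload fluid model solution with
`w(0) = w_ϑ`. -/
def IsFluidSol {K : ℕ} (D : Data K) (ϑ : Fin K → MeasureTheory.Measure (ℝ × ℝ))
    (ζ : ℝ → Fin K → MeasureTheory.Measure (ℝ × ℝ)) : Prop :=
  ∃ w : ℝ → ℝ, IsWorkloadSol D w ∧ w 0 = wMeas ϑ ∧
    (∀ t : ℝ, 0 ≤ t → ∀ k, IsFiniteMeasure (ζ t k) ∧ ζ t k Qᶜ = 0) ∧
    (∀ k, ζ 0 k = ϑ k) ∧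
    (∀ k, ∀ B : Set (ℝ × ℝ), B ⊆ Q → MeasurableSet B → ∀ t : ℝ, 0 ≤ t →
      IntervalIntegrable (fun s => kern (D.Γ k) (w s) (shiftd B (t - s))) volume 0 t ∧
      ζ t k B = ϑ k (shiftd B t) +
        ENNReal.ofReal (D.lam k * ∫ s in (0:ℝ)..t, kern (D.Γ k) (w s) (shiftd B (t - s))))

/-- The candidate invariant state `θ^w`:
`θ^w_k(B) = λ_k ∫_0^w Γ_k({p ≥ u : (w−u, p−u) ∈ B}) du`. -/
def thetaW {K : ℕ} (D : Data K) (w : ℝ) (k : Fin K) : MeasureTheory.Measure (ℝ × ℝ) :=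
  ENNReal.ofReal (D.lam k) •
    MeasureTheory.Measure.map (fun up : ℝ × ℝ => (w - up.1, up.2 - up.1))
      ((((MeasureTheory.volume.restrict (Set.Ioo (0:ℝ) w))).prod (D.Γ k)).restrict
        {up : ℝ × ℝ | up.1 ≤ up.2})

lemma Q_eq_prod : Q = Ici (0 : ℝ) ×ˢ Ici 0 := rfl

lemma isClosed_Q : IsClosed Q := isClosed_Ici.prod isClosed_Ici

lemma measurableSet_Q : MeasurableSet Q := isClosed_Q.measurableSet

lemma frontier_Q_subset : frontier Q ⊆ {x | x.1 = 0 ∨ x.2 = 0} := by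
  rw [Q_eq_prod, frontier_prod_eq, frontier_Ici]
  rintro x (⟨-, hx⟩ | ⟨hx, -⟩)
  exacts [Or.inr hx, Or.inl hx]

lemma continuousAt_indicator_Q {f : ℝ × ℝ → ℝ} (hf : Continuous f) {x : ℝ × ℝ}
    (hx : x ∉ Q ∨ x.1 ≠ 0 ∧ x.2 ≠ 0) : ContinuousAt (Q.indicator f) x := by
  refine hf.continuousOn.continuousAt_indicator fun hfr => ?_
  rcases hx with hx | ⟨hx₁, hx₂⟩
  · exact hx (isClosed_Q.frontier_subset hfr)
  · rcases frontier_Q_subset hfr with h | h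
    exacts [hx₁ h, hx₂ h]

lemma shiftd_eq_preimage {B : Set (ℝ × ℝ)} (hB : B ⊆ Q) {t : ℝ} (ht : 0 ≤ t) :
    shiftd B t = (fun y : ℝ × ℝ => (y.1 - t, y.2 - t)) ⁻¹' B := by
  ext y
  refine ⟨fun hy => hy.2, fun hy => ⟨?_, hy⟩⟩
  have hQ : (y.1 - t, y.2 - t) ∈ Q := hB hy
  exact ⟨by linarith [hQ.1], by linarith [hQ.2]⟩

lemma Gk_nonneg (Γ : Measure ℝ) (x : ℝ) : 0 ≤ Gk Γ x := ENNReal.toReal_nonneg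

lemma Gk_antitone (Γ : Measure ℝ) [IsFiniteMeasure Γ] : Antitone (Gk Γ) := fun _ _ h =>
  ENNReal.toReal_mono (measure_ne_top _ _) (measure_mono (Ioi_subset_Ioi h))

lemma Data.rho_pos {K : ℕ} (D : Data K) (k : Fin K) : 0 < D.rho k :=
  div_pos (D.lam_pos k) (D.mu_pos k)

lemma continuousOn_primitive_Ici {g : ℝ → ℝ}
    (hg : ∀ t, 0 ≤ t → IntervalIntegrable g volume 0 t) :
    ContinuousOn (fun t => ∫ s in (0 : ℝ)..t, g s) (Ici 0) := by
  intro t ht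
  have ht₁ : (0 : ℝ) ≤ t + 1 := by linarith [mem_Ici.mp ht]
  have hcont := intervalIntegral.continuousOn_primitive_interval' (hg _ ht₁) left_mem_uIcc t
    (by rw [uIcc_of_le ht₁]; exact ⟨ht, by linarith⟩)
  refine hcont.mono_of_mem_nhdsWithin ?_
  rw [uIcc_of_le ht₁, ← Ici_inter_Iic]
  exact inter_mem_nhdsWithin _ (Iic_mem_nhds (by linarith))

namespace IsWorkloadSol

variable {K : ℕ} {D : Data K} {w : ℝ → ℝ}

lemma continuousOn (hw : IsWorkloadSol D w) : ContinuousOn w (Ici 0) := by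
  refine ContinuousOn.congr ?_ fun t ht => hw.2.2 t ht
  refine (continuousOn_const.add (continuousOn_finsetSum _ fun k _ => ?_)).sub continuousOn_id
  exact continuousOn_const.mul (continuousOn_primitive_Ici (hw.2.1 k))

lemma add_sub_add (hw : IsWorkloadSol D w) {a b : ℝ} (ha : 0 ≤ a) (hab : a ≤ b) :
    w b + b - (w a + a) = ∑ k, D.rho k * ∫ s in a..b, Gk (D.Γ k) (w s) := by
  have hb : 0 ≤ b := ha.trans hab
  simp_rw [← intervalIntegral.integral_interval_sub_left (hw.2.1 _ b hb) (hw.2.1 _ a ha),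
    mul_sub, Finset.sum_sub_distrib]
  rw [hw.2.2 b hb, hw.2.2 a ha]
  ring

lemma monotoneOn_add_id (hw : IsWorkloadSol D w) : MonotoneOn (fun s => w s + s) (Ici 0) := by
  intro a ha b _ hab
  have hsum : 0 ≤ ∑ k, D.rho k * ∫ s in a..b, Gk (D.Γ k) (w s) :=
    Finset.sum_nonneg fun k _ => mul_nonneg (D.rho_pos k).le
      (intervalIntegral.integral_nonneg hab fun s _ => Gk_nonneg _ _)
  linarith [hw.add_sub_add ha hab]

/-- If `a < b` both lie in this set, then `w ≤ w a` on `[a, b]` (as `w + id ≤ c` there), so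
`G_k ∘ w ≥ G_k (w a) > 0` on `[a, b]` and `w + id` would strictly increase from `a` to `b`. -/
lemma subsingleton_level_Gk_pos (hw : IsWorkloadSol D w) (k : Fin K) (c : ℝ) :
    {s | 0 ≤ s ∧ w s + s = c ∧ 0 < Gk (D.Γ k) (w s)}.Subsingleton := by
  intro a ha b hb
  wlog hab : a < b generalizing a b
  · rcases (not_lt.mp hab).eq_or_lt with h | h
    exacts [h.symm, (this hb ha h).symm]
  exfalso
  obtain ⟨ha, hac, hGa⟩ := ha
  obtain ⟨-, hbc, -⟩ := hb
  have hG_le : ∀ s ∈ Icc a b, Gk (D.Γ k) (w a) ≤ Gk (D.Γ k) (w s) := fun s hs =>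
    Gk_antitone _ (by linarith [hw.monotoneOn_add_id (ha.trans hs.1) (ha.trans hab.le) hs.2, hs.1])
  have hint : IntervalIntegrable (fun s => Gk (D.Γ k) (w s)) volume a b :=
    (hw.2.1 k b (ha.trans hab.le)).mono_set (by
      rw [uIcc_of_le hab.le, uIcc_of_le (ha.trans hab.le)]
      exact Icc_subset_Icc ha le_rfl)
  have hlower : (b - a) * Gk (D.Γ k) (w a) ≤ ∫ s in a..b, Gk (D.Γ k) (w s) := by
    simpa using intervalIntegral.integral_mono_on hab.le intervalIntegrable_const hint hG_le
  have hupper : D.rho k * ∫ s in a..b, Gk (D.Γ k) (w s) ≤ 0 := by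
    calc D.rho k * ∫ s in a..b, Gk (D.Γ k) (w s)
        ≤ ∑ j, D.rho j * ∫ s in a..b, Gk (D.Γ j) (w s) :=
          Finset.single_le_sum (f := fun j => D.rho j * ∫ s in a..b, Gk (D.Γ j) (w s))
            (fun j _ => mul_nonneg (D.rho_pos j).le
              (intervalIntegral.integral_nonneg hab.le fun s _ => Gk_nonneg _ _))
            (Finset.mem_univ k)
      _ = 0 := by rw [← hw.add_sub_add ha hab.le, hac, hbc, sub_self]
  nlinarith [D.rho_pos k, mul_pos (sub_pos.mpr hab) hGa]

lemma ae_not_overshoot (hw : IsWorkloadSol D w) (k : Fin K) {v : ℝ → ℝ} (hv : Continuous v)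
    (hvw : ∀ s, 0 ≤ s → v s = w s) (t₀ : ℝ) :
    ∀ᵐ z ∂(volume.prod (D.Γ k)), ¬ (z.1 ∈ Ioo 0 t₀ ∧ v z.1 + z.1 = t₀ ∧ v z.1 < z.2) := by
  set N := {z : ℝ × ℝ | z.1 ∈ Ioo 0 t₀ ∧ v z.1 + z.1 = t₀ ∧ v z.1 < z.2}
  have hN : MeasurableSet N := by
    refine (measurable_fst measurableSet_Ioo).inter (.inter ?_ ?_)
    · exact measurableSet_eq_fun (by fun_prop) measurable_const
    · exact measurableSet_lt (by fun_prop) measurable_snd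
  have hsection : ∀ s, D.Γ k (Prod.mk s ⁻¹' N) ≠ 0 →
      s ∈ {s | 0 ≤ s ∧ w s + s = t₀ ∧ 0 < Gk (D.Γ k) (w s)} := by
    intro s hs
    obtain ⟨p, hp, hsp, -⟩ := nonempty_of_measure_ne_zero hs
    have hws := hvw s hp.1.le
    refine ⟨hp.1.le, hws ▸ hsp, ENNReal.toReal_pos ?_ (measure_ne_top _ _)⟩
    refine fun h0 => hs (measure_mono_null (fun q hq => ?_) h0)
    exact hws ▸ hq.2.2
  rw [ae_iff]
  simp only [not_not]
  rw [Measure.prod_apply hN, lintegral_eq_zero_iff (measurable_measure_prodMk_left hN)]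
  refine measure_mono_null (fun s hs => hsection s hs) ?_
  exact (hw.subsingleton_level_Gk_pos k t₀).measure_zero _

end IsWorkloadSol

/-- Fluid arriving at time `s ∈ (0, t)` with patience `p` sits at time `t` at
`arrivalMap v t (s, p)`, `v` being the workload; arrivals at zero workload are dropped (`δ⁺`). -/
def arrivalSet (v : ℝ → ℝ) (t : ℝ) : Set (ℝ × ℝ) := ({s | 0 < v s} ∩ Ioo 0 t) ×ˢ univ

def arrivalMap (v : ℝ → ℝ) (t : ℝ) (z : ℝ × ℝ) : ℝ × ℝ := (v z.1 - (t - z.1), z.2 - (t - z.1))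

def arrivalMeasure (Γ : Measure ℝ) (v : ℝ → ℝ) (t : ℝ) : Measure (ℝ × ℝ) :=
  ((volume.prod Γ).restrict (arrivalSet v t)).map (arrivalMap v t)

lemma mem_arrivalSet {v : ℝ → ℝ} {t : ℝ} {z : ℝ × ℝ} :
    z ∈ arrivalSet v t ↔ (0 < v z.1 ∧ 0 < z.1) ∧ z.1 < t := by
  simp [arrivalSet, and_assoc]

lemma measurableSet_arrivalSet {v : ℝ → ℝ} (hv : Continuous v) (t : ℝ) :
    MeasurableSet (arrivalSet v t) :=
  ((isOpen_lt continuous_const hv).measurableSet.inter measurableSet_Ioo).prod .univ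

lemma continuous_arrivalMap {v : ℝ → ℝ} (hv : Continuous v) (t : ℝ) :
    Continuous (arrivalMap v t) := by
  unfold arrivalMap; fun_prop

instance {Γ : Measure ℝ} [IsFiniteMeasure Γ] {v : ℝ → ℝ} {t : ℝ} :
    IsFiniteMeasure ((volume.prod Γ).restrict (arrivalSet v t)) := by
  refine isFiniteMeasure_restrict.mpr (ne_top_of_le_ne_top (b := volume (Ioo 0 t) * Γ univ) ?_ ?_)
  · exact ENNReal.mul_ne_top measure_Ioo_lt_top.ne (measure_ne_top _ _)
  · rw [← Measure.prod_prod]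
    exact measure_mono (prod_mono inter_subset_right subset_rfl)

instance {Γ : Measure ℝ} [IsFiniteMeasure Γ] {v : ℝ → ℝ} {t : ℝ} :
    IsFiniteMeasure (arrivalMeasure Γ v t) := by
  unfold arrivalMeasure; infer_instance

lemma deltaPlus_prod_apply (Γ : Measure ℝ) [SFinite Γ] (x : ℝ) {A : Set (ℝ × ℝ)}
    (hA : MeasurableSet A) :
    (deltaPlus x).prod Γ A = if 0 < x then Γ (Prod.mk x ⁻¹' A) else 0 := by
  unfold deltaPlus
  split_ifs
  · rw [Measure.dirac_prod, Measure.map_apply measurable_prodMk_left hA]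
  · rw [Measure.zero_prod, Measure.coe_zero, Pi.zero_apply]

lemma arrivalMeasure_apply (Γ : Measure ℝ) [SFinite Γ] {v : ℝ → ℝ} (hv : Continuous v)
    {t : ℝ} {B : Set (ℝ × ℝ)} (hB : MeasurableSet B) (hBQ : B ⊆ Q) :
    arrivalMeasure Γ v t B = ∫⁻ s in Ioo 0 t, (deltaPlus (v s)).prod Γ (shiftd B (t - s)) := by
  have hpre : MeasurableSet (arrivalMap v t ⁻¹' B) := (continuous_arrivalMap hv t).measurable hB
  rw [arrivalMeasure, Measure.map_apply (continuous_arrivalMap hv t).measurable hB,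
    Measure.restrict_apply hpre, Measure.prod_apply (hpre.inter (measurableSet_arrivalSet hv t)),
    ← lintegral_indicator measurableSet_Ioo]
  refine lintegral_congr fun s => ?_
  by_cases hs : s ∈ Ioo 0 t
  · have hshift := shiftd_eq_preimage hBQ (sub_nonneg.mpr hs.2.le)
    rw [indicator_of_mem hs, deltaPlus_prod_apply Γ _ (hshift ▸ (by fun_prop : Measurable _) hB)]
    split_ifs with hvs
    · rw [hshift]
      congr 1
      ext p
      simp [arrivalMap, mem_arrivalSet, hvs, hs.1, hs.2]
    · convert measure_empty (μ := Γ)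
      ext p
      simp [mem_arrivalSet, hvs]
  · rw [indicator_of_notMem hs]
    convert measure_empty (μ := Γ)
    ext p
    simp only [mem_Ioo, not_and, not_lt] at hs
    simp only [mem_preimage, mem_inter_iff, mem_arrivalSet, mem_empty_iff_false, iff_false]
    exact fun h => absurd (hs h.2.1.2) h.2.2.not_ge

instance (w : ℝ) : IsFiniteMeasure (deltaPlus w) := by
  unfold deltaPlus; split_ifs <;> infer_instance

lemma ofReal_intervalIntegral_kern (Γ : Measure ℝ) [IsFiniteMeasure Γ] (w : ℝ → ℝ)
    (S : ℝ → Set (ℝ × ℝ)) {t : ℝ} (ht : 0 ≤ t)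
    (hint : IntervalIntegrable (fun s => kern Γ (w s) (S s)) volume 0 t) :
    ENNReal.ofReal (∫ s in (0 : ℝ)..t, kern Γ (w s) (S s)) =
      ∫⁻ s in Ioo 0 t, (deltaPlus (w s)).prod Γ (S s) := by
  rw [intervalIntegral.integral_of_le ht, ofReal_integral_eq_lintegral_ofReal
      ((intervalIntegrable_iff_integrableOn_Ioc_of_le ht).mp hint)
      (.of_forall fun _ => ENNReal.toReal_nonneg),
    Measure.restrict_congr_set Ioo_ae_eq_Ioc.symm]
  exact lintegral_congr fun s => ENNReal.ofReal_toReal (measure_ne_top _ _)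

lemma eq_restrict_Q_of_forall_apply {lam : ℝ} (hlam : 0 ≤ lam) {Γ : Measure ℝ}
    [IsFiniteMeasure Γ] {w v : ℝ → ℝ} (hv : Continuous v) (hvw : ∀ s, 0 ≤ s → v s = w s)
    {ϑk ζtk : Measure (ℝ × ℝ)} {t : ℝ} (ht : 0 ≤ t) (hζQ : ζtk Qᶜ = 0)
    (hform : ∀ B : Set (ℝ × ℝ), B ⊆ Q → MeasurableSet B →
      IntervalIntegrable (fun s => kern Γ (w s) (shiftd B (t - s))) volume 0 t ∧
      ζtk B = ϑk (shiftd B t) +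
        ENNReal.ofReal (lam * ∫ s in (0 : ℝ)..t, kern Γ (w s) (shiftd B (t - s)))) :
    ζtk = (ϑk.map (fun y => (y.1 - t, y.2 - t)) +
      ENNReal.ofReal lam • arrivalMeasure Γ v t).restrict Q := by
  ext A hA
  have hB : MeasurableSet (A ∩ Q) := hA.inter measurableSet_Q
  obtain ⟨hint, hζB⟩ := hform (A ∩ Q) inter_subset_right hB
  have hwv : ∫⁻ s in Ioo 0 t, (deltaPlus (w s)).prod Γ (shiftd (A ∩ Q) (t - s)) =
      ∫⁻ s in Ioo 0 t, (deltaPlus (v s)).prod Γ (shiftd (A ∩ Q) (t - s)) :=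
    setLIntegral_congr_fun measurableSet_Ioo fun s hs => by rw [hvw s hs.1.le]
  rw [Measure.restrict_apply hA, ← measure_inter_add_sdiff₀ A measurableSet_Q.nullMeasurableSet,
    measure_mono_null (sdiff_subset_compl A Q) hζQ, add_zero, hζB, Measure.add_apply,
    Measure.smul_apply, smul_eq_mul, Measure.map_apply (by fun_prop) hB,
    arrivalMeasure_apply Γ hv hB inter_subset_right, ← shiftd_eq_preimage inter_subset_right ht,
    ENNReal.ofReal_mul hlam, ofReal_intervalIntegral_kern Γ w _ ht hint, hwv]

lemma integral_arrivalMeasure (Γ : Measure ℝ) [SFinite Γ] {v : ℝ → ℝ} (hv : Continuous v)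
    (t : ℝ) {g : ℝ × ℝ → ℝ} (hg : Measurable g) :
    ∫ x, g x ∂(arrivalMeasure Γ v t) =
      ∫ z, (arrivalSet v t).indicator (fun z => g (arrivalMap v t z)) z ∂(volume.prod Γ) := by
  rw [arrivalMeasure, integral_map (continuous_arrivalMap hv t).aemeasurable
    hg.aestronglyMeasurable, integral_indicator (measurableSet_arrivalSet hv t)]

lemma integral_restrict_Q_add_arrivalMeasure (f : BoundedContinuousFunction (ℝ × ℝ) ℝ)
    (ϑk : Measure (ℝ × ℝ)) [IsFiniteMeasure ϑk] {lam : ℝ} (hlam : 0 ≤ lam) (Γ : Measure ℝ)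
    [IsFiniteMeasure Γ] {v : ℝ → ℝ} (hv : Continuous v) (t : ℝ) :
    ∫ x, f x ∂((ϑk.map (fun y => (y.1 - t, y.2 - t)) +
      ENNReal.ofReal lam • arrivalMeasure Γ v t).restrict Q) =
    ∫ y, Q.indicator f (y.1 - t, y.2 - t) ∂ϑk + lam *
      ∫ z, (arrivalSet v t).indicator (fun z => Q.indicator f (arrivalMap v t z)) z
        ∂(volume.prod Γ) := by
  have hfQ : Measurable (Q.indicator f) := f.continuous.measurable.indicator measurableSet_Q
  rw [← integral_indicator measurableSet_Q,
    integral_add_measure ((f.integrable _).indicator measurableSet_Q)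
      (((f.integrable _).indicator measurableSet_Q).smul_measure ENNReal.ofReal_ne_top),
    integral_smul_measure, ENNReal.toReal_ofReal hlam, smul_eq_mul,
    integral_map (by fun_prop) hfQ.aestronglyMeasurable, integral_arrivalMeasure Γ hv t hfQ]

lemma norm_indicator_Q_le (f : BoundedContinuousFunction (ℝ × ℝ) ℝ) (x : ℝ × ℝ) :
    ‖Q.indicator f x‖ ≤ ‖f‖ :=
  (norm_indicator_le_norm_self _ _).trans (f.norm_coe_le_norm _)

lemma MemI.ae_ne {K : ℕ} {D : Data K} {ϑ : Fin K → Measure (ℝ × ℝ)} (hϑ : MemI D ϑ) (k : Fin K)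
    {t : ℝ} (ht : 0 ≤ t) : ∀ᵐ y ∂(ϑ k), y.1 ≠ t ∧ y.2 ≠ t := by
  have hC : ∀ x ∈ Q, ϑ k (shift Cset x) = 0 := fun x hx =>
    Finset.sum_eq_zero_iff.mp (hϑ.2.2.1 x hx) k (Finset.mem_univ k)
  rw [ae_iff]
  refine measure_mono_null (t := Qᶜ ∪ shift Cset (t, 0) ∪ shift Cset (0, t)) ?_
    (measure_union_null (measure_union_null (hϑ.2.1 k) (hC _ ⟨ht, le_rfl⟩))
      (hC _ ⟨le_rfl, ht⟩))
  intro y hy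
  by_cases hyQ : y ∈ Q
  · rcases not_and_or.mp hy with h | h <;> rw [not_ne_iff] at h
    · exact .inl (.inr ⟨hyQ, .inr ⟨sub_eq_zero.mpr h, by simpa using hyQ.2⟩⟩)
    · exact .inr ⟨hyQ, .inl ⟨by simpa using hyQ.1, sub_eq_zero.mpr h⟩⟩
  · exact .inl (.inl hyQ)

lemma ae_fst_ne (Γ : Measure ℝ) [SFinite Γ] (c : ℝ) : ∀ᵐ z ∂(volume.prod Γ), z.1 ≠ c :=
  Measure.quasiMeasurePreserving_fst.ae (p := (· ≠ c)) (by simp [ae_iff])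

lemma ae_fst_add_snd_ne (Γ : Measure ℝ) [SFinite Γ] (c : ℝ) :
    ∀ᵐ z ∂(volume.prod Γ), z.1 + z.2 ≠ c := by
  rw [ae_iff]
  simp only [not_not]
  rw [Measure.prod_apply_symm (measurableSet_eq_fun (by fun_prop) measurable_const)]
  convert lintegral_zero with p
  convert measure_singleton (μ := volume) (c - p)
  ext s
  simp [eq_sub_iff_add_eq]

lemma continuousAt_integral_indicator_Q_shift (f : BoundedContinuousFunction (ℝ × ℝ) ℝ)
    {μ : Measure (ℝ × ℝ)} [IsFiniteMeasure μ] {t₀ : ℝ} (hμ : ∀ᵐ y ∂μ, y.1 ≠ t₀ ∧ y.2 ≠ t₀) :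
    ContinuousAt (fun t => ∫ y, Q.indicator f (y.1 - t, y.2 - t) ∂μ) t₀ := by
  have hfQ : Measurable (Q.indicator f) := f.continuous.measurable.indicator measurableSet_Q
  refine continuousAt_of_dominated (bound := fun _ => ‖f‖)
    (.of_forall fun t => (hfQ.comp (by fun_prop)).aestronglyMeasurable)
    (.of_forall fun t => ae_of_all _ fun y => norm_indicator_Q_le f _) (integrable_const _) ?_
  filter_upwards [hμ] with y hy
  exact (continuousAt_indicator_Q f.continuous
    (.inr ⟨sub_ne_zero.mpr hy.1, sub_ne_zero.mpr hy.2⟩)).comp (by fun_prop)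

/-- The only delicate case is `v s + s = t₀`, where the first coordinate of `arrivalMap`
crosses `0` at `t₀`; the integrand then stays `0` unless `p > v s`. -/
lemma continuousAt_indicator_arrivalSet (f : BoundedContinuousFunction (ℝ × ℝ) ℝ) {v : ℝ → ℝ}
    {t₀ : ℝ} {z : ℝ × ℝ} (h₁ : z.1 ≠ t₀) (h₂ : z.1 + z.2 ≠ t₀)
    (h₃ : ¬ (z.1 ∈ Ioo 0 t₀ ∧ v z.1 + z.1 = t₀ ∧ v z.1 < z.2)) :
    ContinuousAt
      (fun t => (arrivalSet v t).indicator (fun z => Q.indicator f (arrivalMap v t z)) z) t₀ := by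
  by_cases hA : 0 < v z.1 ∧ 0 < z.1
  swap
  · have hzero : ∀ t, (arrivalSet v t).indicator (fun z => Q.indicator f (arrivalMap v t z)) z
        = 0 := fun t => indicator_of_notMem (fun h => hA (mem_arrivalSet.mp h).1) _
    simp only [hzero]
    exact continuousAt_const
  rcases h₁.lt_or_gt with hlt | hgt
  · refine ContinuousAt.congr (f := fun t => Q.indicator f (arrivalMap v t z)) ?_
      ((eventually_gt_nhds hlt).mono fun t ht =>
        (indicator_of_mem (mem_arrivalSet.mpr ⟨hA, ht⟩)
          (fun z => Q.indicator f (arrivalMap v t z))).symm)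
    refine (continuousAt_indicator_Q f.continuous ?_).comp
      (f := fun t => arrivalMap v t z) (by unfold arrivalMap; fun_prop)
    simp only [arrivalMap]
    by_cases hcross : v z.1 + z.1 = t₀
    · have hle : z.2 ≤ v z.1 := not_lt.mp fun h => h₃ ⟨⟨hA.2, hlt⟩, hcross, h⟩
      exact .inl fun hQ => h₂ (by linarith [hQ.2])
    · exact .inr ⟨fun h => hcross (by linarith), fun h => h₂ (by linarith)⟩
  · refine ContinuousAt.congr (f := fun _ => (0 : ℝ)) continuousAt_const
      ((eventually_lt_nhds hgt).mono fun t ht =>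
        (indicator_of_notMem (fun h => (mem_arrivalSet.mp h).2.not_gt ht) _).symm)

lemma continuousAt_integral_indicator_arrivalSet (f : BoundedContinuousFunction (ℝ × ℝ) ℝ)
    {Γ : Measure ℝ} [IsFiniteMeasure Γ] {v : ℝ → ℝ} (hv : Continuous v) {t₀ : ℝ}
    (hv₀ : ∀ᵐ z ∂(volume.prod Γ), ¬ (z.1 ∈ Ioo 0 t₀ ∧ v z.1 + z.1 = t₀ ∧ v z.1 < z.2)) :
    ContinuousAt (fun t => ∫ z, (arrivalSet v t).indicator
      (fun z => Q.indicator f (arrivalMap v t z)) z ∂(volume.prod Γ)) t₀ := by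
  have hfQ : Measurable (Q.indicator f) := f.continuous.measurable.indicator measurableSet_Q
  have hbound : Integrable ((Ioo 0 (t₀ + 1) ×ˢ univ).indicator fun _ => ‖f‖) (volume.prod Γ) := by
    refine (integrable_indicator_iff (measurableSet_Ioo.prod .univ)).mpr (integrableOn_const ?_)
    rw [Measure.prod_prod]
    exact ENNReal.mul_ne_top measure_Ioo_lt_top.ne (measure_ne_top _ _)
  refine continuousAt_of_dominated
    (.of_forall fun t => (((hfQ.comp (continuous_arrivalMap hv t).measurable).indicator
      (measurableSet_arrivalSet hv t))).aestronglyMeasurable) ?_ hbound ?_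
  · filter_upwards [eventually_lt_nhds (lt_add_one t₀)] with t ht
    refine ae_of_all _ fun z => ?_
    rw [norm_indicator_eq_indicator_norm]
    refine (indicator_le_indicator (norm_indicator_Q_le f _)).trans
      (indicator_le_indicator_of_subset (fun z hz => ?_) (fun _ => norm_nonneg _) z)
    obtain ⟨⟨-, hz₁⟩, hzt⟩ := mem_arrivalSet.mp hz
    exact ⟨⟨hz₁, hzt.trans ht⟩, mem_univ _⟩
  · filter_upwards [ae_fst_ne Γ t₀, ae_fst_add_snd_ne Γ t₀, hv₀] with z h₁ h₂ h₃
    exact continuousAt_indicator_arrivalSet f h₁ h₂ h₃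

/-- For `ϑ ∈ I` and the fluid model solution `ζ` with initial measure `ϑ`,
each `t ↦ ζ_k(t)` is continuous on `[0,∞)` in the topology of weak convergence, i.e.
`t ↦ ∫ f dζ_k(t)` is continuous on `[0,∞)` for every bounded continuous `f`. -/
theorem fluid_weakly_continuous {K : ℕ} (D : Data K)
    (ϑ : Fin K → MeasureTheory.Measure (ℝ × ℝ)) (hϑ : MemI D ϑ)
    (ζ : ℝ → Fin K → MeasureTheory.Measure (ℝ × ℝ)) (hζ : IsFluidSol D ϑ ζ) :
    ∀ k, ∀ f : BoundedContinuousFunction (ℝ × ℝ) ℝ,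
      ContinuousOn (fun t : ℝ => ∫ x, f x ∂(ζ t k)) (Set.Ici (0:ℝ)) := by
  obtain ⟨w, hw, -, hζQ, -, hform⟩ := hζ
  intro k f
  have := hϑ.1 k
  set v : ℝ → ℝ := fun s => w (max s 0)
  have hv : Continuous v :=
    hw.continuousOn.comp_continuous (continuous_id.max continuous_const) fun s => le_max_right s 0
  have hvw : ∀ s, 0 ≤ s → v s = w s := fun s hs => by simp only [v, max_eq_left hs]
  have hlam := (D.lam_pos k).le
  refine ContinuousOn.congr (fun t₀ ht₀ => ContinuousAt.continuousWithinAt ?_) fun t ht => by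
    rw [eq_restrict_Q_of_forall_apply hlam hv hvw ht (hζQ t ht k).2 fun B hBQ hB =>
      hform k B hBQ hB t ht, integral_restrict_Q_add_arrivalMeasure f (ϑ k) hlam _ hv t]
  exact (continuousAt_integral_indicator_Q_shift f (hϑ.ae_ne k ht₀)).add
    (continuousAt_const.mul (continuousAt_integral_indicator_arrivalSet f hv
      (hw.ae_not_overshoot k hv hvw t₀)))

end OverloadedFIFO
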